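/- Let N ≥ 3 be odd, let ψ_g be the 1D graph state, and let ρ = ψ_g ψ_g† be the corresponding pure density matrix. Then the expectation values of the symmetrized certification operators are all exactly 1: Re(tr(ρ·U_X)) = 1, Re(tr(ρ·M_0)) = 1, Re(tr(ρ·M_{N−1})) = 1, and Re(tr(ρ·M_i)) = 1 for all 1 ≤ i ≤ N−2, where M_0 = X_0·Z_1 + Z_0·X_1, M_{N−1} = X_{N−2}·Z_{N−1} + Z_{N−2}·X_{N−1}, and M_i = Z_{i−1}·X_i·Z_{i+1} + Z_{i−1}·Z_i·X_{i+1} + X_{i−1}·Z_i·Z_{i+1}. (The paper's verification that the exact graph state passes the uniform-measurement certification with all measured quantities equal to one.) -/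

import Mathlib

open Matrix
open scoped ComplexOrder

/-- The single-site Pauli `X` operator on site `i` of `N` qubits. -/
def PauliX (N : ℕ) (i : Fin N) : Matrix (Fin N → Fin 2) (Fin N → Fin 2) ℂ :=
  Matrix.of fun f g => if f i ≠ g i ∧ ∀ j, j ≠ i → f j = g j then 1 else 0

/-- The single-site Pauli `Z` operator on site `i` of `N` qubits. -/
def PauliZ (N : ℕ) (i : Fin N) : Matrix (Fin N → Fin 2) (Fin N → Fin 2) ℂ :=
  Matrix.of fun f g => if f = g then (-1 : ℂ) ^ (f i : ℕ) else 0

/-- The uniform `X`-string `U_X = ∏_{i even} X_i` over the even 0-based sites. -/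
noncomputable def UX (N : ℕ) : Matrix (Fin N → Fin 2) (Fin N → Fin 2) ℂ :=
  (((List.finRange N).filter fun i : Fin N => (i : ℕ) % 2 = 0).map (PauliX N)).prod

/-- The 1D graph state on `N` qubits,
`ψ_g(b) = 2^{−N/2}·(−1)^{Σ_{i=0}^{N−2} (b i)·(b (i+1))}`. -/
noncomputable def graphState (N : ℕ) : (Fin N → Fin 2) → ℂ := fun b =>
  (-1 : ℂ) ^ (∑ i : Fin N, if h : (i : ℕ) + 1 < N then
      (b i : ℕ) * (b ⟨(i : ℕ) + 1, h⟩ : ℕ) else 0)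
    / (Real.sqrt 2 : ℂ) ^ N

/-!
Write `ψ_g b = (-1)^(q b) / √2^N` with the edge parity `q b = ∑ b_i b_{i+1}` in `ZMod 2`. The
matrix `X_s` translates configurations by the unit vector `e_s` and `Z_s` multiplies by
`(-1)^(b_s)`; since `q (b + e) = q b + q e + polar b e`, every product of Pauli matrices maps `ψ_g`
to `b ↦ (-1)^(f b) ψ_g b` for an explicit `f`, whose expectation is the average of `(-1)^(f b)`.
For the stabilisers `Z_{i-1} X_i Z_{i+1}`, the boundary ones `X_0 Z_1`, `Z_{N-2} X_{N-1}`, and for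
`U_X` (every odd site has both neighbours even when `N` is odd) `f = 0`, so the expectation is `1`.
For the other terms `f` changes by `1` under translation by some `e_t`, so the average vanishes.
-/

theorem Matrix.trace_vecMulVec_mul {ι R : Type*} [Fintype ι] [CommSemiring R] (u v : ι → R)
    (A : Matrix ι ι R) : (vecMulVec u v * A).trace = v ⬝ᵥ (A *ᵥ u) := by
  rw [vecMulVec_mul, trace_vecMulVec, dotProduct_comm, dotProduct_mulVec]

namespace GraphState

open Finset

def negOnePow (x : ZMod 2) : ℂ := (-1) ^ x.val

@[simp] lemma negOnePow_zero : negOnePow 0 = 1 := pow_zero _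

@[simp] lemma negOnePow_one : negOnePow 1 = -1 := pow_one _

lemma negOnePow_add (x y : ZMod 2) : negOnePow (x + y) = negOnePow x * negOnePow y := by
  unfold negOnePow
  rw [ZMod.val_add, ← neg_one_pow_eq_pow_mod_two, pow_add]

lemma negOnePow_natCast (n : ℕ) : negOnePow n = (-1) ^ n := by
  rw [negOnePow, ZMod.val_natCast, ← neg_one_pow_eq_pow_mod_two]

lemma negOnePow_mul_self (x : ZMod 2) : negOnePow x * negOnePow x = 1 := by
  rw [← negOnePow_add, CharTwo.add_self_eq_zero, negOnePow_zero]

variable {N : ℕ}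

/-- Sites `j ≥ N` carry the bit `0`, so that the boundary sites need no separate treatment. -/
def bit (b : Fin N → Fin 2) (j : ℕ) : ZMod 2 :=
  if h : j < N then ((b ⟨j, h⟩ : ℕ) : ZMod 2) else 0

lemma bit_of_le (b : Fin N → Fin 2) {j : ℕ} (h : N ≤ j) : bit b j = 0 := dif_neg (by omega)

lemma bit_add (b e : Fin N → Fin 2) (j : ℕ) : bit (b + e) j = bit b j + bit e j := by
  unfold bit
  split_ifs
  · exact (by decide : ∀ x y : Fin 2, (((x + y : Fin 2) : ℕ) : ZMod 2) = (x : ℕ) + (y : ℕ)) _ _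
  · simp

lemma bit_single (s : Fin N) (j : ℕ) : bit (Pi.single s 1) j = if j = s then 1 else 0 := by
  unfold bit
  split_ifs with h hj hj <;> simp [Fin.ext_iff, hj]
  omega

def q (b : Fin N → Fin 2) : ZMod 2 := ∑ i ∈ range N, bit b i * bit b (i + 1)

def polar (b e : Fin N → Fin 2) : ZMod 2 :=
  ∑ i ∈ range N, (bit b i * bit e (i + 1) + bit e i * bit b (i + 1))

lemma q_add (b e : Fin N → Fin 2) : q (b + e) = q b + q e + polar b e := by
  simp only [q, polar, bit_add, ← sum_add_distrib]
  exact sum_congr rfl fun i _ => by ring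

lemma q_single (s : Fin N) : q (Pi.single s 1) = 0 :=
  sum_eq_zero fun i _ => by simp only [bit_single]; split_ifs <;> first | omega | simp

lemma polar_single_eq (b : Fin N → Fin 2) (s : Fin N) :
    polar b (Pi.single s 1) = (if (s : ℕ) = 0 then 0 else bit b (s - 1)) + bit b (s + 1) := by
  simp only [polar, bit_single, mul_ite, ite_mul, mul_one, one_mul, mul_zero, zero_mul,
    sum_add_distrib, sum_ite_eq', mem_range, s.isLt, if_true]
  congr 1
  split_ifs with hs
  · exact sum_eq_zero fun i _ => if_neg (by omega)
  · rw [sum_congr rfl fun i _ => if_congr (by omega : i + 1 = (s : ℕ) ↔ i = (s : ℕ) - 1) rfl rfl,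
      sum_ite_eq', if_pos (mem_range.2 (by omega))]

lemma graphState_eq (b : Fin N → Fin 2) :
    graphState N b = negOnePow (q b) / (Real.sqrt 2 : ℂ) ^ N := by
  rw [graphState, ← negOnePow_natCast, Nat.cast_sum, q, ← Fin.sum_univ_eq_sum_range]
  congr 3
  funext i
  unfold bit
  split_ifs <;> simp_all

lemma graphState_add (b e : Fin N → Fin 2) :
    graphState N (b + e) = negOnePow (q e + polar b e) * graphState N b := by
  rw [graphState_eq, graphState_eq, q_add, add_assoc, negOnePow_add, negOnePow_add]
  ring

lemma star_graphState : star (graphState N) = graphState N := by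
  funext b
  simp [graphState_eq, negOnePow]

lemma graphState_mul_self (b : Fin N → Fin 2) : graphState N b * graphState N b = 1 / 2 ^ N := by
  rw [graphState_eq, div_mul_div_comm, negOnePow_mul_self, ← mul_pow, ← Complex.ofReal_mul,
    Real.mul_self_sqrt zero_le_two]
  norm_num

lemma PauliZ_mulVec (s : Fin N) (v : (Fin N → Fin 2) → ℂ) :
    PauliZ N s *ᵥ v = fun b => negOnePow (bit b s) * v b := by
  funext b
  simp [mulVec, dotProduct, PauliZ, bit, negOnePow_natCast]

lemma PauliX_mulVec (s : Fin N) (v : (Fin N → Fin 2) → ℂ) :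
    PauliX N s *ᵥ v = fun b => v (b + Pi.single s 1) := by
  funext b
  have hflip : ∀ c : Fin N → Fin 2,
      (b s ≠ c s ∧ ∀ j, j ≠ s → b j = c j) ↔ c = b + Pi.single s 1 := by
    intro c
    simp only [funext_iff, Pi.add_apply, Pi.single_apply]
    constructor
    · rintro ⟨hs, hj⟩ j
      split_ifs with h
      · subst h; omega
      · simp [hj j h]
    · intro h
      refine ⟨?_, fun j hj => by simp [h j, hj]⟩
      rw [h s, if_pos rfl]
      omega
  simp [mulVec, dotProduct, PauliX, hflip]

lemma prod_map_PauliX_mulVec (l : List (Fin N)) (v : (Fin N → Fin 2) → ℂ) :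
    (l.map (PauliX N)).prod *ᵥ v = fun b => v (b + (l.map fun s => Pi.single s 1).sum) := by
  induction l generalizing v with
  | nil => simp
  | cons s l ih =>
    simp only [List.map_cons, List.prod_cons, List.sum_cons, ← mulVec_mulVec, ih, PauliX_mulVec,
      add_assoc]

noncomputable def signedGraphState (f : (Fin N → Fin 2) → ZMod 2) : (Fin N → Fin 2) → ℂ :=
  fun b => negOnePow (f b) * graphState N b

lemma signedGraphState_of_eq_zero {f : (Fin N → Fin 2) → ZMod 2} (hf : ∀ b, f b = 0) :
    signedGraphState f = graphState N := by
  funext b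
  simp [signedGraphState, hf]

lemma signedGraphState_zero : signedGraphState (N := N) (fun _ => 0) = graphState N :=
  signedGraphState_of_eq_zero fun _ => rfl

lemma PauliZ_mulVec_signedGraphState (s : Fin N) (f : (Fin N → Fin 2) → ZMod 2) :
    PauliZ N s *ᵥ signedGraphState f = signedGraphState fun b => bit b s + f b := by
  funext b
  simp only [PauliZ_mulVec, signedGraphState, negOnePow_add, mul_assoc]

lemma PauliX_mulVec_signedGraphState (s : Fin N) (f : (Fin N → Fin 2) → ZMod 2) :
    PauliX N s *ᵥ signedGraphState f =
      signedGraphState fun b => f (b + Pi.single s 1) + polar b (Pi.single s 1) := by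
  funext b
  simp only [PauliX_mulVec, signedGraphState, graphState_add, q_single, zero_add, negOnePow_add,
    mul_assoc]

lemma dotProduct_signedGraphState (f : (Fin N → Fin 2) → ZMod 2) :
    star (graphState N) ⬝ᵥ signedGraphState f = (∑ b, negOnePow (f b)) / 2 ^ N := by
  simp only [dotProduct, star_graphState, signedGraphState, mul_left_comm (graphState N _),
    graphState_mul_self, sum_div]
  exact sum_congr rfl fun b _ => by ring

lemma dotProduct_graphState_self : star (graphState N) ⬝ᵥ graphState N = 1 := by
  rw [star_graphState]
  simp [dotProduct, graphState_mul_self]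

lemma dotProduct_signedGraphState_eq_zero {f : (Fin N → Fin 2) → ZMod 2} (e : Fin N → Fin 2)
    (hf : ∀ b, f (b + e) = f b + 1) : star (graphState N) ⬝ᵥ signedGraphState f = 0 := by
  have hsum : ∑ b, negOnePow (f b) = -∑ b, negOnePow (f b) := by
    conv_lhs => rw [← Equiv.sum_comp (Equiv.addRight e)]
    simp [hf, negOnePow_add]
  rw [dotProduct_signedGraphState, CharZero.eq_neg_self_iff.mp hsum, zero_div]

lemma PauliXZ_mulVec_graphState (a c : Fin N) (ha : (a : ℕ) = 0) (hc : (c : ℕ) = 1) :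
    (PauliX N a * PauliZ N c) *ᵥ graphState N = graphState N := by
  conv_lhs => rw [← signedGraphState_zero]
  simp only [← mulVec_mulVec, PauliZ_mulVec_signedGraphState, PauliX_mulVec_signedGraphState]
  refine signedGraphState_of_eq_zero fun b => ?_
  simp only [bit_add, bit_single, polar_single_eq]
  grind

lemma PauliZX_mulVec_graphState (a s : Fin N) (hs : (s : ℕ) = a + 1) (hN : (a : ℕ) + 2 = N) :
    (PauliZ N a * PauliX N s) *ᵥ graphState N = graphState N := by
  conv_lhs => rw [← signedGraphState_zero]
  simp only [← mulVec_mulVec, PauliZ_mulVec_signedGraphState, PauliX_mulVec_signedGraphState]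
  refine signedGraphState_of_eq_zero fun b => ?_
  simp only [polar_single_eq, bit_of_le b (show N ≤ s + 1 by omega)]
  grind

lemma PauliZXZ_mulVec_graphState (a s c : Fin N) (hs : (s : ℕ) = a + 1) (hc : (c : ℕ) = a + 2) :
    (PauliZ N a * PauliX N s * PauliZ N c) *ᵥ graphState N = graphState N := by
  conv_lhs => rw [← signedGraphState_zero]
  simp only [← mulVec_mulVec, PauliZ_mulVec_signedGraphState, PauliX_mulVec_signedGraphState]
  refine signedGraphState_of_eq_zero fun b => ?_
  simp only [bit_add, bit_single, polar_single_eq]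
  grind

lemma dotProduct_PauliXZ_mulVec_graphState (t a c : Fin N) (ha : (a : ℕ) = t + 1)
    (hc : (c : ℕ) = t + 2) :
    star (graphState N) ⬝ᵥ ((PauliX N a * PauliZ N c) *ᵥ graphState N) = 0 := by
  conv_lhs => enter [2]; rw [← signedGraphState_zero]
  simp only [← mulVec_mulVec, PauliZ_mulVec_signedGraphState, PauliX_mulVec_signedGraphState]
  refine dotProduct_signedGraphState_eq_zero (Pi.single t 1) fun b => ?_
  simp only [bit_add, bit_single, polar_single_eq]
  grind

lemma dotProduct_PauliZX_mulVec_graphState (a s t : Fin N) (hs : (s : ℕ) = a + 1)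
    (ht : (t : ℕ) = a + 2) :
    star (graphState N) ⬝ᵥ ((PauliZ N a * PauliX N s) *ᵥ graphState N) = 0 := by
  conv_lhs => enter [2]; rw [← signedGraphState_zero]
  simp only [← mulVec_mulVec, PauliZ_mulVec_signedGraphState, PauliX_mulVec_signedGraphState]
  refine dotProduct_signedGraphState_eq_zero (Pi.single t 1) fun b => ?_
  simp only [bit_add, bit_single, polar_single_eq]
  grind

lemma dotProduct_PauliZZX_mulVec_graphState (a s c : Fin N) (hs : (s : ℕ) = a + 1)
    (hc : (c : ℕ) = a + 2) :
    star (graphState N) ⬝ᵥ ((PauliZ N a * PauliZ N s * PauliX N c) *ᵥ graphState N) = 0 := by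
  conv_lhs => enter [2]; rw [← signedGraphState_zero]
  simp only [← mulVec_mulVec, PauliZ_mulVec_signedGraphState, PauliX_mulVec_signedGraphState]
  refine dotProduct_signedGraphState_eq_zero (Pi.single a 1) fun b => ?_
  simp only [bit_add, bit_single, polar_single_eq]
  grind

lemma dotProduct_PauliXZZ_mulVec_graphState (a s c : Fin N) (hs : (s : ℕ) = a + 1)
    (hc : (c : ℕ) = a + 2) :
    star (graphState N) ⬝ᵥ ((PauliX N a * PauliZ N s * PauliZ N c) *ᵥ graphState N) = 0 := by
  conv_lhs => enter [2]; rw [← signedGraphState_zero]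
  simp only [← mulVec_mulVec, PauliZ_mulVec_signedGraphState, PauliX_mulVec_signedGraphState]
  refine dotProduct_signedGraphState_eq_zero (Pi.single c 1) fun b => ?_
  simp only [bit_add, bit_single, polar_single_eq]
  grind

def evenSites : Fin N → Fin 2 := fun i => if (i : ℕ) % 2 = 0 then 1 else 0

lemma UX_mulVec (v : (Fin N → Fin 2) → ℂ) : UX N *ᵥ v = fun b => v (b + evenSites) := by
  rw [UX, prod_map_PauliX_mulVec, ← List.sum_toFinset _ ((List.nodup_finRange N).filter _)]
  congr! 3
  funext j
  simp [Finset.sum_apply, Pi.single_apply, evenSites]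

lemma bit_evenSites (j : ℕ) : bit (evenSites (N := N)) j = if j % 2 = 0 ∧ j < N then 1 else 0 := by
  unfold bit evenSites
  split_ifs <;> simp_all

lemma q_evenSites : q (evenSites (N := N)) = 0 :=
  sum_eq_zero fun i _ => by simp only [bit_evenSites]; split_ifs <;> first | omega | simp

lemma polar_evenSites (hodd : Odd N) (b : Fin N → Fin 2) : polar b evenSites = 0 := by
  obtain ⟨k, rfl⟩ := hodd
  suffices h : ∀ m ≤ k, ∑ i ∈ range (2 * m + 1),
      (bit b i * bit evenSites (i + 1) + bit evenSites i * bit b (i + 1)) = bit b (2 * m + 1) by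
    rw [polar, h k le_rfl, bit_of_le b le_rfl]
  intro m hm
  induction m with
  | zero => simp [bit_evenSites]
  | succ m ih =>
    rw [show 2 * (m + 1) + 1 = 2 * m + 1 + 1 + 1 by ring, sum_range_succ, sum_range_succ,
      ih (by omega)]
    simp only [bit_evenSites]
    grind

lemma UX_mulVec_graphState (hodd : Odd N) : UX N *ᵥ graphState N = graphState N := by
  rw [UX_mulVec]
  funext b
  rw [graphState_add, q_evenSites, polar_evenSites hodd, add_zero, negOnePow_zero,
    one_mul]

end GraphState

/-- The exact graph state passes the uniform-measurement certification: in the pure state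
`ρ = ψ_g ψ_g†`, the expectation values of `U_X` and of all the symmetrized certification
operators `M_0`, `M_{N−1}`, and `M_i` (`1 ≤ i ≤ N−2`, parameterized by `j = i − 1`)
are all exactly 1. -/
theorem graphState_certification_values_one
    (N : ℕ) (hN : 3 ≤ N) (hodd : Odd N) :
    ((vecMulVec (graphState N) (star (graphState N)) * UX N).trace).re = 1 ∧
    ((vecMulVec (graphState N) (star (graphState N)) *
        (PauliX N ⟨0, by omega⟩ * PauliZ N ⟨1, by omega⟩ +
         PauliZ N ⟨0, by omega⟩ * PauliX N ⟨1, by omega⟩)).trace).re = 1 ∧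
    ((vecMulVec (graphState N) (star (graphState N)) *
        (PauliX N ⟨N - 2, by omega⟩ * PauliZ N ⟨N - 1, by omega⟩ +
         PauliZ N ⟨N - 2, by omega⟩ * PauliX N ⟨N - 1, by omega⟩)).trace).re = 1 ∧
    ∀ j : ℕ, ∀ hj : j + 2 < N,
      ((vecMulVec (graphState N) (star (graphState N)) *
          (PauliZ N ⟨j, by omega⟩ * PauliX N ⟨j + 1, by omega⟩ * PauliZ N ⟨j + 2, hj⟩ +
           PauliZ N ⟨j, by omega⟩ * PauliZ N ⟨j + 1, by omega⟩ * PauliX N ⟨j + 2, hj⟩ +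
           PauliX N ⟨j, by omega⟩ * PauliZ N ⟨j + 1, by omega⟩ *
             PauliZ N ⟨j + 2, hj⟩)).trace).re = 1 := by
  open GraphState in
  simp only [trace_vecMulVec_mul, add_mulVec, dotProduct_add]
  refine ⟨?_, ?_, ?_, fun j hj => ?_⟩
  · rw [UX_mulVec_graphState hodd, dotProduct_graphState_self, Complex.one_re]
  · rw [PauliXZ_mulVec_graphState _ _ rfl rfl, dotProduct_graphState_self,
      dotProduct_PauliZX_mulVec_graphState _ _ ⟨2, by omega⟩ rfl rfl]
    simp
  · rw [dotProduct_PauliXZ_mulVec_graphState ⟨N - 3, by omega⟩ _ _ (by dsimp only; omega)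
        (by dsimp only; omega),
      PauliZX_mulVec_graphState _ _ (by dsimp only; omega) (by dsimp only; omega),
      dotProduct_graphState_self]
    simp
  · rw [PauliZXZ_mulVec_graphState _ _ _ rfl rfl, dotProduct_graphState_self,
      dotProduct_PauliZZX_mulVec_graphState _ _ _ rfl rfl,
      dotProduct_PauliXZZ_mulVec_graphState _ _ _ rfl rfl]
    simp
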